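/- Assume D(A_B) is dense in H, μ₀ ∈ ρ(A_B), and there exists a sequence (z_n) in ρ(A_B) with |z_n| → ∞ such that the operators z_n(A_B − z_n I)^{−1} are uniformly bounded in norm. Then the closure of 𝒮 in H equals the closure of 𝒯 in H; in particular the closure of 𝒮 does not depend on the choice of μ₀ ∈ ρ(A_B). -/
import Mathlib


open scoped InnerProductSpace
open Filter

variable {H 𝓗 𝓚 : Type*}
  [NormedAddCommGroup H] [InnerProductSpace ℂ H] [CompleteSpace H]
  [NormedAddCommGroup 𝓗] [InnerProductSpace ℂ 𝓗] [CompleteSpace 𝓗]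
  [NormedAddCommGroup 𝓚] [InnerProductSpace ℂ 𝓚] [CompleteSpace 𝓚]

/-- `R` is the (bounded, everywhere defined) inverse of `A_B − λ`, where `A_B` is the
restriction of `T` to `{u ∈ D(T) : Γ₁ u = B (Γ₂ u)}`. -/
def IsResolventAt (dom : Submodule ℂ H) (T : dom →ₗ[ℂ] H)
    (Γ₁ : dom →ₗ[ℂ] 𝓗) (Γ₂ : dom →ₗ[ℂ] 𝓚) (B : 𝓚 →L[ℂ] 𝓗)
    (lam : ℂ) (R : H →L[ℂ] H) : Prop :=
  (∀ h : H, ∃ hm : R h ∈ dom,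
      Γ₁ ⟨R h, hm⟩ = B (Γ₂ ⟨R h, hm⟩) ∧ T ⟨R h, hm⟩ - lam • R h = h) ∧
  (∀ u : dom, Γ₁ u = B (Γ₂ u) → R (T u - lam • (u : H)) = (u : H))

/-- The resolvent set `ρ(A_B)`. -/
def resolventSetB (dom : Submodule ℂ H) (T : dom →ₗ[ℂ] H)
    (Γ₁ : dom →ₗ[ℂ] 𝓗) (Γ₂ : dom →ₗ[ℂ] 𝓚) (B : 𝓚 →L[ℂ] 𝓗) : Set ℂ :=
  {lam | ∃ R : H →L[ℂ] H, IsResolventAt dom T Γ₁ Γ₂ B lam R}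

/-- The space `𝒮 = Span_{δ ∉ σ(A_B)} (A_B − δ)⁻¹ Ran (S_{μ₀,B})`. -/
def spaceS (dom : Submodule ℂ H) (T : dom →ₗ[ℂ] H)
    (Γ₁ : dom →ₗ[ℂ] 𝓗) (Γ₂ : dom →ₗ[ℂ] 𝓚) (B : 𝓚 →L[ℂ] 𝓗) (μ₀ : ℂ) :
    Submodule ℂ H :=
  Submodule.span ℂ {x : H | ∃ (δ : ℂ) (R : H →L[ℂ] H) (v : dom),
    IsResolventAt dom T Γ₁ Γ₂ B δ R ∧ T v = μ₀ • (v : H) ∧ x = R (v : H)}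

/-- The space `𝒯 = Span_{μ ∉ σ(A_B)} Ran (S_{μ,B})`. -/
def spaceT (dom : Submodule ℂ H) (T : dom →ₗ[ℂ] H)
    (Γ₁ : dom →ₗ[ℂ] 𝓗) (Γ₂ : dom →ₗ[ℂ] 𝓚) (B : 𝓚 →L[ℂ] 𝓗) :
    Submodule ℂ H :=
  Submodule.span ℂ {x : H | ∃ (μ : ℂ) (hx : x ∈ dom),
    μ ∈ resolventSetB dom T Γ₁ Γ₂ B ∧ T ⟨x, hx⟩ = μ • x}

-- key limit lemma
lemma keylim (dom : Submodule ℂ H) (T : dom →ₗ[ℂ] H)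
    (Γ₁ : dom →ₗ[ℂ] 𝓗) (Γ₂ : dom →ₗ[ℂ] 𝓚) (B : 𝓚 →L[ℂ] 𝓗)
    (hdense : Dense {x : H | ∃ hx : x ∈ dom, Γ₁ ⟨x, hx⟩ = B (Γ₂ ⟨x, hx⟩)})
    (z : ℕ → ℂ) (R : ℕ → (H →L[ℂ] H)) (M : ℝ)
    (hzres : ∀ n, IsResolventAt dom T Γ₁ Γ₂ B (z n) (R n))
    (hzinf : Filter.Tendsto (fun n => ‖z n‖) Filter.atTop Filter.atTop)
    (hbdd : ∀ n, ‖z n • R n‖ ≤ M) (x : H) :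
    Filter.Tendsto (fun n => z n • (R n x)) Filter.atTop (nhds (-x)) := by
  have hM : 0 ≤ M := le_trans (norm_nonneg _) (hbdd 0)
  rw [Metric.tendsto_atTop]
  intro ε hε
  have hε' : 0 < ε / (2 * (M + 1)) := by positivity
  obtain ⟨u, hu, hdu⟩ := hdense.exists_dist_lt x hε'
  obtain ⟨hm, hBC⟩ := hu
  set U : dom := ⟨u, hm⟩ with hU
  have key : ∀ n, z n • R n u + u = R n (T U) := by
    intro n
    have h2 := (hzres n).2 U hBC
    simp only [map_sub, map_smul] at h2
    have : R n (T U) = (u : H) + z n • R n u := by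
      rw [sub_eq_iff_eq_add] at h2; simpa using h2
    rw [this]; abel
  -- eventual bound on ‖z n‖
  set K : ℝ := 2 * (M * ‖T U‖ + 1) / ε with hK
  obtain ⟨N, hN⟩ := (hzinf.eventually_ge_atTop (max 1 K)).exists_forall_of_atTop
  refine ⟨N, fun n hn => ?_⟩
  have hKn := hN n hn
  have hz1 : 1 ≤ ‖z n‖ := le_trans (le_max_left _ _) hKn
  have hzpos : 0 < ‖z n‖ := by linarith
  have hxu : ‖x - u‖ < ε / (2 * (M + 1)) := by rwa [dist_eq_norm] at hdu
  have hRTU : ‖R n (T U)‖ ≤ M * ‖T U‖ / ‖z n‖ := by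
    have h1 : ‖z n‖ * ‖R n (T U)‖ ≤ M * ‖T U‖ := by
      calc ‖z n‖ * ‖R n (T U)‖ = ‖(z n • R n) (T U)‖ := by
            simp [norm_smul]
        _ ≤ ‖z n • R n‖ * ‖T U‖ := (z n • R n).le_opNorm _
        _ ≤ M * ‖T U‖ := mul_le_mul_of_nonneg_right (hbdd n) (norm_nonneg _)
    rw [le_div_iff₀ hzpos]; linarith [h1]
  have hfrac : M * ‖T U‖ / ‖z n‖ < ε / 2 := by
    have hKn2 : K ≤ ‖z n‖ := le_trans (le_max_right _ _) hKn
    have h2 : 2 * (M * ‖T U‖ + 1) ≤ ‖z n‖ * ε := by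
      rw [hK, div_le_iff₀ hε] at hKn2; linarith
    rw [div_lt_iff₀ hzpos]
    nlinarith [norm_nonneg (T U)]
  have hb1 : ‖z n • R n x + x‖ ≤ M * ‖x - u‖ + ‖x - u‖ + ‖R n (T U)‖ := by
    have hdecomp : z n • R n x + x
        = (z n • R n) (x - u) + (x - u) + R n (T U) := by
      rw [← key n]
      simp only [ContinuousLinearMap.smul_apply, map_sub, smul_sub]
      abel
    rw [hdecomp]
    refine le_trans (norm_add₃_le) ?_
    gcongr
    exact le_trans ((z n • R n).le_opNorm _) (mul_le_mul_of_nonneg_right (hbdd n) (norm_nonneg _))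
  rw [dist_eq_norm, sub_neg_eq_add]
  have hMx : M * ‖x - u‖ + ‖x - u‖ < ε / 2 := by
    have : (M + 1) * ‖x - u‖ < (M + 1) * (ε / (2 * (M + 1))) := by
      apply mul_lt_mul_of_pos_left hxu; linarith
    have heq : (M + 1) * (ε / (2 * (M + 1))) = ε / 2 := by field_simp
    nlinarith [norm_nonneg (x - u)]
  linarith [hb1, hRTU, hfrac]

set_option linter.unusedSectionVars false
set_option maxHeartbeats 1000000

lemma neumann (dom : Submodule ℂ H) (T : dom →ₗ[ℂ] H)
    (Γ₁ : dom →ₗ[ℂ] 𝓗) (Γ₂ : dom →ₗ[ℂ] 𝓚) (B : 𝓚 →L[ℂ] 𝓗) (μ₀ : ℂ)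
    (R' : H →L[ℂ] H) (hres : IsResolventAt dom T Γ₁ Γ₂ B μ₀ R')
    (c : ℂ) (hc : ‖c • R'‖ < 1) :
    IsResolventAt dom T Γ₁ Γ₂ B (μ₀ + c)
      (R' * ↑(Units.oneSub (c • R') hc)⁻¹) := by
  set C : H →L[ℂ] H := ↑(Units.oneSub (c • R') hc)⁻¹ with hCdef
  have hCleft : (1 - c • R') * C = 1 := by
    rw [← Units.val_oneSub (c • R') hc]; exact Units.mul_inv _
  have hCright : C * (1 - c • R') = 1 := by
    rw [← Units.val_oneSub (c • R') hc]; exact Units.inv_mul _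
  have h1 : (1 - c • R') * R' = R' * (1 - c • R') := by
    simp [mul_sub, sub_mul, smul_mul_assoc, mul_smul_comm]
  have hcomm : R' * C = C * R' := by
    calc R' * C = ((C * (1 - c • R')) * R') * C := by rw [hCright, one_mul]
      _ = (C * ((1 - c • R') * R')) * C := by rw [mul_assoc C]
      _ = (C * (R' * (1 - c • R'))) * C := by rw [h1]
      _ = C * (R' * ((1 - c • R') * C)) := by rw [mul_assoc, mul_assoc]
      _ = C * R' := by rw [hCleft, mul_one]
  constructor
  · intro h
    obtain ⟨hm, hBC, heq⟩ := hres.1 (C h)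
    have happ : C h - c • R' (C h) = h := by
      have := congrArg (fun (A : H →L[ℂ] H) => A h) hCleft
      simpa [ContinuousLinearMap.mul_apply, ContinuousLinearMap.sub_apply,
        ContinuousLinearMap.smul_apply, ContinuousLinearMap.one_apply, sub_smul] using this
    refine ⟨hm, hBC, ?_⟩
    calc T ⟨R' (C h), hm⟩ - (μ₀ + c) • (R' * C) h
        = (T ⟨R' (C h), hm⟩ - μ₀ • R' (C h)) - c • R' (C h) := by
          rw [add_smul]; simp only [ContinuousLinearMap.mul_apply]; abel
      _ = C h - c • R' (C h) := by rw [heq]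
      _ = h := happ
  · intro u hBC
    have h2 := hres.2 u hBC
    have hRval : R' (T u - (μ₀ + c) • (u : H)) = (u : H) - c • R' u := by
      have : T u - (μ₀ + c) • (u : H) = (T u - μ₀ • (u : H)) - c • (u : H) := by
        rw [add_smul]; abel
      rw [this, map_sub, map_smul, h2]
    have hcompC : (R' * C) (T u - (μ₀ + c) • (u : H))
        = C (R' (T u - (μ₀ + c) • (u : H))) := by
      rw [hcomm]; rfl
    rw [hcompC, hRval]
    have := congrArg (fun (A : H →L[ℂ] H) => A (u : H)) hCright
    simpa [ContinuousLinearMap.mul_apply, ContinuousLinearMap.sub_apply,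
      ContinuousLinearMap.smul_apply, ContinuousLinearMap.one_apply] using this

lemma neumannEx (dom : Submodule ℂ H) (T : dom →ₗ[ℂ] H)
    (Γ₁ : dom →ₗ[ℂ] 𝓗) (Γ₂ : dom →ₗ[ℂ] 𝓚) (B : 𝓚 →L[ℂ] 𝓗) (μ₀ : ℂ)
    (R' : H →L[ℂ] H) (hres : IsResolventAt dom T Γ₁ Γ₂ B μ₀ R')
    (c : ℂ) (hc : ‖c • R'‖ < 1) :
    ∃ C : H →L[ℂ] H, (1 - c • R') * C = 1 ∧ C * (1 - c • R') = 1 ∧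
      IsResolventAt dom T Γ₁ Γ₂ B (μ₀ + c) (R' * C) := by
  refine ⟨↑(Units.oneSub (c • R') hc)⁻¹, ?_, ?_, neumann dom T Γ₁ Γ₂ B μ₀ R' hres c hc⟩
  · rw [← Units.val_oneSub (c • R') hc]; exact Units.mul_inv _
  · rw [← Units.val_oneSub (c • R') hc]; exact Units.inv_mul _


lemma genT (dom : Submodule ℂ H) (T : dom →ₗ[ℂ] H)
    (Γ₁ : dom →ₗ[ℂ] 𝓗) (Γ₂ : dom →ₗ[ℂ] 𝓚) (B : 𝓚 →L[ℂ] 𝓗) (μ₀ : ℂ)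
    (hμ₀ : μ₀ ∈ resolventSetB dom T Γ₁ Γ₂ B)
    (δ : ℂ) (Rδ : H →L[ℂ] H) (hres : IsResolventAt dom T Γ₁ Γ₂ B δ Rδ)
    (v : dom) (hv : T v = μ₀ • (v : H)) (hδ : δ ≠ μ₀) :
    Rδ (v : H) ∈ spaceT dom T Γ₁ Γ₂ B := by
  obtain ⟨hm, hBC, heq⟩ := hres.1 (v : H)
  set w : dom := ⟨Rδ (v : H), hm⟩ with hw
  have hTw : T w = (v : H) + δ • Rδ (v : H) := by
    rw [sub_eq_iff_eq_add] at heq; exact heq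
  set u : dom := v - (μ₀ - δ) • w with hu
  have hwc : (w : H) = Rδ (v : H) := rfl
  have hcu : (u : H) = (v : H) - (μ₀ - δ) • Rδ (v : H) := by
    rw [hu]; push_cast [hwc]; ring_nf
  have hTu : T u = δ • (u : H) := by
    rw [hu, map_sub, map_smul, hv, hTw, ← hu, hcu]
    module
  have humem : (u : H) ∈ spaceT dom T Γ₁ Γ₂ B :=
    Submodule.subset_span ⟨δ, u.2, ⟨Rδ, hres⟩, hTu⟩
  have hvmem : (v : H) ∈ spaceT dom T Γ₁ Γ₂ B :=
    Submodule.subset_span ⟨μ₀, v.2, hμ₀, hv⟩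
  have hkey : Rδ (v : H) = (μ₀ - δ)⁻¹ • ((v : H) - (u : H)) := by
    have hne : μ₀ - δ ≠ 0 := sub_ne_zero.mpr (Ne.symm hδ)
    rw [hcu, sub_sub_cancel, smul_smul, inv_mul_cancel₀ hne, one_smul]
  rw [hkey]
  exact Submodule.smul_mem _ _ (Submodule.sub_mem _ hvmem humem)

lemma eig_mem_closS (dom : Submodule ℂ H) (T : dom →ₗ[ℂ] H)
    (Γ₁ : dom →ₗ[ℂ] 𝓗) (Γ₂ : dom →ₗ[ℂ] 𝓚) (B : 𝓚 →L[ℂ] 𝓗) (μ₀ : ℂ)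
    (hdense : Dense {x : H | ∃ hx : x ∈ dom, Γ₁ ⟨x, hx⟩ = B (Γ₂ ⟨x, hx⟩)})
    (z : ℕ → ℂ) (R : ℕ → (H →L[ℂ] H)) (M : ℝ)
    (hzres : ∀ n, IsResolventAt dom T Γ₁ Γ₂ B (z n) (R n))
    (hzinf : Filter.Tendsto (fun n => ‖z n‖) Filter.atTop Filter.atTop)
    (hbdd : ∀ n, ‖z n • R n‖ ≤ M)
    (v : dom) (hv : T v = μ₀ • (v : H)) :
    (v : H) ∈ closure (spaceS dom T Γ₁ Γ₂ B μ₀ : Set H) := by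
  have hlim := keylim dom T Γ₁ Γ₂ B hdense z R M hzres hzinf hbdd (v : H)
  have hlim2 : Tendsto (fun n => -(z n • R n (v : H))) atTop (nhds (v : H)) := by
    simpa using hlim.neg
  refine mem_closure_of_tendsto hlim2 (Filter.Eventually.of_forall fun n => ?_)
  have h1 : -(z n • R n (v : H)) = (-(z n)) • R n (v : H) := by rw [neg_smul]
  rw [h1]
  exact Submodule.smul_mem _ _
    (Submodule.subset_span ⟨z n, R n, v, hzres n, hv, rfl⟩)


lemma Rmu_mem_closT (dom : Submodule ℂ H) (T : dom →ₗ[ℂ] H)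
    (Γ₁ : dom →ₗ[ℂ] 𝓗) (Γ₂ : dom →ₗ[ℂ] 𝓚) (B : 𝓚 →L[ℂ] 𝓗) (δ : ℂ)
    (hμ₀ : δ ∈ resolventSetB dom T Γ₁ Γ₂ B)
    (Rδ : H →L[ℂ] H) (hres : IsResolventAt dom T Γ₁ Γ₂ B δ Rδ)
    (v : dom) (hv : T v = δ • (v : H)) :
    Rδ (v : H) ∈ closure (spaceT dom T Γ₁ Γ₂ B : Set H) := by
  rw [Metric.mem_closure_iff]
  intro ε hε
  set t : ℝ := ‖Rδ‖ with ht
  have ht0 : 0 ≤ t := norm_nonneg _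
  set r : ℝ := min (1 / (2 * (t + 1)))
    (ε / (2 * (t + 1) ^ 2 * (‖(v : H)‖ + 1) + 1)) with hr
  have hr0 : 0 < r := by
    apply lt_min <;> positivity
  have hrt : r * t ≤ 1 / 2 := by
    have h1 : r ≤ 1 / (2 * (t + 1)) := min_le_left _ _
    rw [le_div_iff₀ (by positivity : (0:ℝ) < 2 * (t + 1))] at h1
    nlinarith
  have hc : ‖(r : ℂ) • Rδ‖ < 1 := by
    rw [norm_smul, Complex.norm_real, Real.norm_eq_abs, abs_of_pos hr0]
    nlinarith
  obtain ⟨C, hCleft, hCright, hRc⟩ := neumannEx dom T Γ₁ Γ₂ B δ Rδ hres (r : ℂ) hc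
  have hrne : (r : ℂ) ≠ 0 := Complex.ofReal_ne_zero.mpr (ne_of_gt hr0)
  have hne : δ + (r : ℂ) ≠ δ := fun hcon =>
    hrne (by rwa [add_eq_left] at hcon)
  have hmemT : (Rδ * C) (v : H) ∈ spaceT dom T Γ₁ Γ₂ B :=
    genT dom T Γ₁ Γ₂ B δ hμ₀ (δ + (r : ℂ)) (Rδ * C) hRc v hv hne
  refine ⟨(Rδ * C) (v : H), hmemT, ?_⟩
  obtain ⟨y, hy⟩ : ∃ y, y = C (v : H) := ⟨_, rfl⟩
  have happ : y - (r : ℂ) • Rδ y = (v : H) := by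
    have h0 := congrArg (fun (A : H →L[ℂ] H) => A (v : H)) hCleft
    rw [hy]
    simpa [ContinuousLinearMap.mul_apply, ContinuousLinearMap.sub_apply,
      ContinuousLinearMap.smul_apply, ContinuousLinearMap.one_apply] using h0
  have hRCy : (Rδ * C) (v : H) = Rδ y := by rw [hy]; rfl
  have hCv_bound : ‖y‖ ≤ 2 * ‖(v : H)‖ := by
    have h1 : ‖y‖ ≤ ‖(v : H)‖ + r * (t * ‖y‖) := by
      calc ‖y‖ = ‖(v : H) + (r : ℂ) • Rδ y‖ := by rw [← happ]; congr 1; abel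
        _ ≤ ‖(v : H)‖ + ‖(r : ℂ) • Rδ y‖ := norm_add_le _ _
        _ ≤ ‖(v : H)‖ + r * (t * ‖y‖) := by
            rw [norm_smul, Complex.norm_real, Real.norm_eq_abs, abs_of_pos hr0]
            gcongr
            exact Rδ.le_opNorm _
    nlinarith [norm_nonneg y]
  have hdiff : ‖Rδ (v : H) - (Rδ * C) (v : H)‖ ≤ 2 * r * t ^ 2 * ‖(v : H)‖ := by
    have h2 : Rδ (v : H) - (Rδ * C) (v : H) = Rδ ((v : H) - y) := by
      rw [map_sub, hRCy]
    have h3 : (v : H) - y = -((r : ℂ) • Rδ y) := by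
      rw [← happ]; abel
    calc ‖Rδ (v : H) - (Rδ * C) (v : H)‖ ≤ t * ‖(v : H) - y‖ := by
          rw [h2]; exact Rδ.le_opNorm _
      _ = t * (r * ‖Rδ y‖) := by
          rw [h3, norm_neg, norm_smul, Complex.norm_real, Real.norm_eq_abs,
            abs_of_pos hr0]
      _ ≤ t * (r * (t * (2 * ‖(v : H)‖))) := by
          gcongr
          exact le_trans (Rδ.le_opNorm _) (by gcongr)
      _ = 2 * r * t ^ 2 * ‖(v : H)‖ := by ring
  rw [dist_eq_norm]
  have hrb : r * (2 * (t + 1) ^ 2 * (‖(v : H)‖ + 1) + 1) ≤ ε := by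
    have h1 : r ≤ ε / (2 * (t + 1) ^ 2 * (‖(v : H)‖ + 1) + 1) := min_le_right _ _
    rw [le_div_iff₀ (by positivity)] at h1
    linarith
  have hvn : 0 ≤ ‖(v : H)‖ := norm_nonneg _
  have key : 2 * r * t ^ 2 * ‖(v : H)‖ ≤ 2 * r * (t + 1) ^ 2 * (‖(v : H)‖ + 1) := by
    have h1 : t ^ 2 ≤ (t + 1) ^ 2 := by nlinarith
    have h2 : ‖(v : H)‖ ≤ ‖(v : H)‖ + 1 := by linarith
    gcongr
  calc ‖Rδ (v : H) - (Rδ * C) (v : H)‖ ≤ 2 * r * t ^ 2 * ‖(v : H)‖ := hdiff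
    _ < ε := by nlinarith [key, hrb, hr0]

theorem stmt4 (dom : Submodule ℂ H) (T : dom →ₗ[ℂ] H)
    (Γ₁ : dom →ₗ[ℂ] 𝓗) (Γ₂ : dom →ₗ[ℂ] 𝓚) (B : 𝓚 →L[ℂ] 𝓗) (μ₀ : ℂ)
    (hdense : Dense {x : H | ∃ hx : x ∈ dom, Γ₁ ⟨x, hx⟩ = B (Γ₂ ⟨x, hx⟩)})
    (hμ₀ : μ₀ ∈ resolventSetB dom T Γ₁ Γ₂ B)
    (z : ℕ → ℂ) (R : ℕ → (H →L[ℂ] H)) (M : ℝ)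
    (hzres : ∀ n, IsResolventAt dom T Γ₁ Γ₂ B (z n) (R n))
    (hzinf : Filter.Tendsto (fun n => ‖z n‖) Filter.atTop Filter.atTop)
    (hbdd : ∀ n, ‖z n • R n‖ ≤ M) :
    closure (spaceS dom T Γ₁ Γ₂ B μ₀ : Set H) =
      closure (spaceT dom T Γ₁ Γ₂ B : Set H) := by
  apply Set.Subset.antisymm
  · -- closure 𝒮 ⊆ closure 𝒯
    apply closure_minimal ?_ isClosed_closure
    have hle : spaceS dom T Γ₁ Γ₂ B μ₀ ≤ (spaceT dom T Γ₁ Γ₂ B).topologicalClosure := by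
      refine Submodule.span_le.mpr ?_
      rintro x ⟨δ, Rδ, v, hres, hv, rfl⟩
      show Rδ (v : H) ∈ closure (spaceT dom T Γ₁ Γ₂ B : Set H)
      by_cases hδ : δ = μ₀
      · subst hδ
        exact Rmu_mem_closT dom T Γ₁ Γ₂ B δ hμ₀ Rδ hres v hv
      · exact subset_closure (genT dom T Γ₁ Γ₂ B μ₀ hμ₀ δ Rδ hres v hv hδ)
    intro x hx
    exact hle hx
  · -- closure 𝒯 ⊆ closure 𝒮
    apply closure_minimal ?_ isClosed_closure
    have hle : spaceT dom T Γ₁ Γ₂ B ≤ (spaceS dom T Γ₁ Γ₂ B μ₀).topologicalClosure := by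
      refine Submodule.span_le.mpr ?_
      rintro x ⟨μ, hxdom, hμ, hTx⟩
      obtain ⟨R₀, hres₀⟩ := hμ₀
      obtain ⟨Rμ, hresμ⟩ := hμ
      obtain ⟨hm, hBC, heq⟩ := hres₀.1 x
      set X : dom := ⟨x, hxdom⟩ with hX
      set W : dom := ⟨R₀ x, hm⟩ with hW
      have hTW : T W = x + μ₀ • R₀ x := by
        rw [sub_eq_iff_eq_add] at heq; exact heq
      set V : dom := X - (μ - μ₀) • W with hV
      have hcV : (V : H) = x - (μ - μ₀) • R₀ x := by
        rw [hV]; push_cast; rfl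
      have hTV : T V = μ₀ • (V : H) := by
        rw [hV, map_sub, map_smul, hTx, hTW, ← hV, hcV]
        module
      have hVcl : (V : H) ∈ closure (spaceS dom T Γ₁ Γ₂ B μ₀ : Set H) :=
        eig_mem_closS dom T Γ₁ Γ₂ B μ₀ hdense z R M hzres hzinf hbdd V hTV
      have hRμV : Rμ (V : H) = R₀ x := by
        have h2 := hresμ.2 W hBC
        have harg : T W - μ • (W : H) = (V : H) := by
          rw [hTW, hcV]
          show x + μ₀ • R₀ x - μ • R₀ x = x - (μ - μ₀) • R₀ x
          module
        rw [harg] at h2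
        exact h2
      have hRmem : Rμ (V : H) ∈ spaceS dom T Γ₁ Γ₂ B μ₀ :=
        Submodule.subset_span ⟨μ, Rμ, V, hresμ, hTV, rfl⟩
      have hxeq : x = (V : H) + (μ - μ₀) • Rμ (V : H) := by
        rw [hRμV, hcV]; module
      show x ∈ (spaceS dom T Γ₁ Γ₂ B μ₀).topologicalClosure
      rw [hxeq]
      refine add_mem ?_ (Submodule.smul_mem _ _
        (Submodule.le_topologicalClosure _ hRmem))
      exact hVcl
    intro x hx
    exact hle hx
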